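/- Every optimizer of the merged-objective dual gives all exact reduced costs on I: if u* maximizes w(u) + (1/|I|)·Σ_{kl∈I} r_{kl}(u) over dual feasible u, where I is a set of pairwise incompatible indices each in some feasible solution, then for every kl ∈ I one has w(u*) + r_{kl}(u*) = z*_{|kl} = z* + R_{kl}. -/

import Mathlib

/-!
For every dual feasible `u`, weak duality on the problem restricted to `x_kl = 1` gives
`w(u) + r_kl(u) ≤ z* + R_kl`, so the merged objective never exceeds the average
`z* + |I|⁻¹ Σ_{kl ∈ I} R_kl`. The LP `min c·x` over feasible `x` with `x_kl ≥ 1/|I|` on `I` is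
feasible (average the solutions through each `kl`), and its value is at least that average: an
integral optimum of `c` lowered by `R` on `I` (idealness) meets `I` at most once
(incompatibility), so `c·x ≥ z* + Σ R_kl x_kl ≥ z* + |I|⁻¹ Σ R_kl`. Its LP dual is the merged
dual, the multiplier of `x ≥ 1/|I|` being the vector of reduced costs, so by strong duality
(Farkas' lemma, proved by Fourier–Motzkin elimination) the merged optimum reaches the average.
An average of terms each bounded by its own target reaches the average of the targets only if
every term is tight.
-/

open Matrix

/-- Primal feasibility for the LP with partition constraints:
Ax ≥ b, Σ_{j : grp j = i} x_j = 1 for each group i, x ≥ 0. -/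
def Feas {m n E : ℕ} (A : Matrix (Fin m) (Fin E) ℝ) (b : Fin m → ℝ)
    (grp : Fin E → Fin n) (x : Fin E → ℝ) : Prop :=
  b ≤ A.mulVec x ∧ (∀ i : Fin n, (∑ j : Fin E, if grp j = i then x j else 0) = 1) ∧ 0 ≤ x

/-- A 0/1 (integral) vector. -/
def Integral {E : ℕ} (x : Fin E → ℝ) : Prop := ∀ j, x j = 0 ∨ x j = 1

/-- Dual feasibility: u_q ≥ 0 and u_{grp j} + Σ_q A_{qj} u_q ≤ c_j for each index j. -/
def DualFeas {m n E : ℕ} (A : Matrix (Fin m) (Fin E) ℝ) (c : Fin E → ℝ)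
    (grp : Fin E → Fin n) (uq : Fin m → ℝ) (uv : Fin n → ℝ) : Prop :=
  0 ≤ uq ∧ ∀ j : Fin E, uv (grp j) + (∑ q : Fin m, A q j * uq q) ≤ c j

/-- Dual objective w(u) = b·u_q + Σ_i u_i. -/
def dualObj {m n : ℕ} (b : Fin m → ℝ) (uq : Fin m → ℝ) (uv : Fin n → ℝ) : ℝ :=
  b ⬝ᵥ uq + ∑ i : Fin n, uv i

/-- Reduced cost r_j(u) = c_j − u_{grp j} − Σ_q A_{qj} u_q. -/
def rc {m n E : ℕ} (A : Matrix (Fin m) (Fin E) ℝ) (c : Fin E → ℝ)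
    (grp : Fin E → Fin n) (uq : Fin m → ℝ) (uv : Fin n → ℝ) (j : Fin E) : ℝ :=
  c j - uv (grp j) - ∑ q : Fin m, A q j * uq q

open Finset

lemma Finset.exists_between_of_forall_le {ι : Type*} (P N : Finset ι) (f : ι → ℝ)
    (h : ∀ p ∈ P, ∀ q ∈ N, f p ≤ f q) :
    ∃ t : ℝ, (∀ p ∈ P, f p ≤ t) ∧ ∀ q ∈ N, t ≤ f q := by
  rcases P.eq_empty_or_nonempty with rfl | hP
  · obtain ⟨t, ht⟩ := (N.image f).bddBelow
    exact ⟨t, by simp, fun q hq => ht (mem_image_of_mem f hq)⟩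
  · exact ⟨P.sup' hP f, fun p hp => le_sup' f hp,
      fun q hq => sup'_le hP f fun p hp => h p hp q hq⟩

section FourierMotzkin

variable {R : Type} [DecidableEq R]

/-- Given the last column `a` of a system, row `inl z` keeps row `z` when `a z = 0`, and row
`inr (p, q)` combines a row with `a p > 0` and a row with `a q < 0` so that the last
variable cancels. -/
noncomputable def fourierMotzkinCoeff (a : R → ℝ) : Matrix (R ⊕ R × R) R ℝ :=
  of <| Sum.elim (fun z => if a z = 0 then Pi.single z 1 else 0)
    fun pq => if 0 < a pq.1 ∧ a pq.2 < 0 then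
      a pq.1 • Pi.single pq.2 1 - a pq.2 • Pi.single pq.1 1 else 0

variable (a : R → ℝ)

lemma fourierMotzkinCoeff_nonneg : ∀ r q, 0 ≤ fourierMotzkinCoeff a r q := by
  rintro (z | ⟨p, q⟩) r
  · simp only [fourierMotzkinCoeff, of_apply, Sum.elim_inl]
    split_ifs <;> simp [Pi.single_apply, apply_ite]
  · simp only [fourierMotzkinCoeff, of_apply, Sum.elim_inr]
    split_ifs with h
    · simp only [Pi.sub_apply, Pi.smul_apply, smul_eq_mul, Pi.single_apply]
      split_ifs <;> nlinarith [h.1, h.2]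
    · simp

lemma fourierMotzkinCoeff_mulVec_inl [Fintype R] (e : R → ℝ) (z : R) :
    (fourierMotzkinCoeff a *ᵥ e) (Sum.inl z) = if a z = 0 then e z else 0 := by
  simp only [mulVec, fourierMotzkinCoeff, of_apply, Sum.elim_inl]
  split_ifs <;> simp

lemma fourierMotzkinCoeff_mulVec_inr [Fintype R] (e : R → ℝ) (p q : R) :
    (fourierMotzkinCoeff a *ᵥ e) (Sum.inr (p, q)) =
      if 0 < a p ∧ a q < 0 then a p * e q - a q * e p else 0 := by
  simp only [mulVec, fourierMotzkinCoeff, of_apply, Sum.elim_inr]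
  split_ifs <;> simp [dotProduct, sub_mul, sum_sub_distrib, Pi.single_apply]

lemma fourierMotzkinCoeff_mulVec_self [Fintype R] : fourierMotzkinCoeff a *ᵥ a = 0 := by
  ext (z | ⟨p, q⟩)
  · rw [fourierMotzkinCoeff_mulVec_inl]; split_ifs <;> simp [*]
  · rw [fourierMotzkinCoeff_mulVec_inr]; split_ifs <;> simp [mul_comm]

lemma exists_le_smul_of_fourierMotzkinCoeff_mulVec_nonpos [Fintype R] (e : R → ℝ)
    (h : fourierMotzkinCoeff a *ᵥ e ≤ 0) : ∃ t : ℝ, e ≤ t • a := by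
  have hzero : ∀ z, a z = 0 → e z ≤ 0 := fun z hz => by
    simpa [fourierMotzkinCoeff_mulVec_inl, hz] using h (Sum.inl z)
  have hpair : ∀ p q, 0 < a p → a q < 0 → e p / a p ≤ e q / a q := fun p q hp hq => by
    have hpq := h (Sum.inr (p, q))
    rw [fourierMotzkinCoeff_mulVec_inr, if_pos ⟨hp, hq⟩, Pi.zero_apply] at hpq
    rw [le_div_iff_of_neg hq, div_mul_eq_mul_div, le_div_iff₀ hp]
    linarith
  obtain ⟨t, hpos, hneg⟩ := exists_between_of_forall_le {p | 0 < a p} {q | a q < 0}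
    (fun q => e q / a q) (by simpa using fun p hp q hq => hpair p q hp hq)
  refine ⟨t, fun q => ?_⟩
  rw [Pi.smul_apply, smul_eq_mul]
  rcases lt_trichotomy (a q) 0 with hq | hq | hq
  · exact (le_div_iff_of_neg hq).1 (hneg q (by simpa using hq))
  · simpa [hq] using hzero q hq
  · exact (div_le_iff₀ hq).1 (hpos q (by simpa using hq))

end FourierMotzkin

theorem exists_farkas_certificate : ∀ {s : ℕ} {R : Type} [Fintype R] [DecidableEq R]
    (M : Matrix R (Fin s) ℝ) (d : R → ℝ), (∀ x, ¬ d ≤ M *ᵥ x) →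
    ∃ y : R → ℝ, 0 ≤ y ∧ y ᵥ* M = 0 ∧ 0 < d ⬝ᵥ y
  | 0, R, _, _, M, d, hinf => by
    obtain ⟨q, hq⟩ : ∃ q, ¬ d q ≤ 0 := by
      simpa [Pi.le_def] using hinf 0
    exact ⟨Pi.single q 1, Pi.single_nonneg.2 zero_le_one, Subsingleton.elim _ _,
      by simpa using hq⟩
  | s + 1, R, _, _, M, d, hinf => by
    set a : R → ℝ := fun q => M q (Fin.last s)
    set M' : Matrix R (Fin s) ℝ := of fun q j => M q j.castSucc
    set C := fourierMotzkinCoeff a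
    have hsnoc : ∀ x' t, M *ᵥ Fin.snoc x' t = M' *ᵥ x' + t • a := fun x' t => by
      ext q
      simp [mulVec, dotProduct, Fin.sum_univ_castSucc, M', a, mul_comm]
    obtain ⟨y', hy'0, hy'M, hy'd⟩ := exists_farkas_certificate (C * M') (C *ᵥ d) fun x' hx' => by
      rw [← mulVec_mulVec, ← sub_nonpos, ← mulVec_sub] at hx'
      obtain ⟨t, ht⟩ := exists_le_smul_of_fourierMotzkinCoeff_mulVec_nonpos a _ hx'
      exact hinf (Fin.snoc x' t) (by rw [hsnoc]; exact sub_le_iff_le_add'.1 ht)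
    refine ⟨y' ᵥ* C, fun q => sum_nonneg fun r _ =>
      mul_nonneg (hy'0 r) (fourierMotzkinCoeff_nonneg a r q), ?_, ?_⟩
    · ext j
      refine Fin.lastCases ?_ (fun j => ?_) j
      · change (y' ᵥ* C) ⬝ᵥ a = 0
        rw [← dotProduct_mulVec, fourierMotzkinCoeff_mulVec_self, dotProduct_zero]
      · change (y' ᵥ* C ᵥ* M') j = 0
        rw [vecMul_vecMul, hy'M, Pi.zero_apply]
    · rwa [dotProduct_comm, ← dotProduct_mulVec, dotProduct_comm]

theorem exists_dual_gt_of_forall_le {s : ℕ} {R : Type} [Fintype R] [DecidableEq R]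
    (M : Matrix R (Fin s) ℝ) (d : R → ℝ) (c : Fin s → ℝ) {V W : ℝ}
    (hfeas : ∃ x, d ≤ M *ᵥ x) (hbdd : ∀ x, d ≤ M *ᵥ x → V ≤ c ⬝ᵥ x) (hW : W < V) :
    ∃ y : R → ℝ, 0 ≤ y ∧ y ᵥ* M = c ∧ W < d ⬝ᵥ y := by
  obtain ⟨y₁, hy₀, hyM, hyd⟩ := exists_farkas_certificate (fromRows M (replicateRow Unit (-c)))
    (Sum.elim d fun _ => -W) fun x hx => by
      simp only [fromRows_mulVec, Sum.elim_le_elim_iff, replicateRow_mulVec_eq_const] at hx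
      have hc : -W ≤ -(c ⬝ᵥ x) := by simpa using hx.2 ()
      linarith [hbdd x hx.1]
  obtain ⟨y, t, rfl⟩ : ∃ y t, y₁ = Sum.elim y fun _ => t :=
    ⟨y₁ ∘ Sum.inl, y₁ (Sum.inr ()), by ext (_ | _) <;> rfl⟩
  simp only [sumElim_vecMul_fromRows, sumElim_dotProduct_sumElim] at hyM hyd
  have hyM' : y ᵥ* M = t • c := by
    rw [← sub_eq_zero, ← hyM]
    ext j
    simp [vecMul, dotProduct, replicateRow, sub_eq_add_neg]
  have hyd' : W * t < d ⬝ᵥ y := by simpa [dotProduct] using hyd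
  have hy : 0 ≤ y := fun q => hy₀ (Sum.inl q)
  -- With `t = 0`, `y` would certify that `d ≤ M *ᵥ x` is infeasible.
  have ht : 0 < t := by
    obtain ⟨x, hx⟩ := hfeas
    refine (show 0 ≤ t from hy₀ (Sum.inr ())).lt_of_ne fun ht₀ => ?_
    have hdy : d ⬝ᵥ y ≤ (y ᵥ* M) ⬝ᵥ x :=
      calc d ⬝ᵥ y ≤ (M *ᵥ x) ⬝ᵥ y := dotProduct_le_dotProduct_of_nonneg_right hx hy
        _ = (y ᵥ* M) ⬝ᵥ x := by rw [dotProduct_comm, dotProduct_mulVec]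
    rw [hyM', ← ht₀, zero_smul, zero_dotProduct] at hdy
    rw [← ht₀, mul_zero] at hyd'
    linarith
  refine ⟨t⁻¹ • y, smul_nonneg (inv_nonneg.2 ht.le) hy, ?_, ?_⟩
  · rw [smul_vecMul, hyM', smul_smul, inv_mul_cancel₀ ht.ne', one_smul]
  · rw [dotProduct_smul, smul_eq_mul, lt_inv_mul_iff₀ ht]
    linarith

theorem exists_dual_gt_of_forall_le_of_mixed {s : ℕ} {ι κ : Type} [Fintype ι] [DecidableEq ι]
    [Fintype κ] [DecidableEq κ] (A : Matrix ι (Fin s) ℝ) (b : ι → ℝ) (G : Matrix κ (Fin s) ℝ)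
    (g : κ → ℝ) (ℓ c : Fin s → ℝ) {V W : ℝ}
    (hfeas : ∃ x, b ≤ A *ᵥ x ∧ G *ᵥ x = g ∧ ℓ ≤ x)
    (hbdd : ∀ x, b ≤ A *ᵥ x → G *ᵥ x = g → ℓ ≤ x → V ≤ c ⬝ᵥ x) (hW : W < V) :
    ∃ (y : ι → ℝ) (v : κ → ℝ) (μ : Fin s → ℝ), 0 ≤ y ∧ 0 ≤ μ ∧ y ᵥ* A + v ᵥ* G + μ = c ∧
      W < b ⬝ᵥ y + g ⬝ᵥ v + ℓ ⬝ᵥ μ := by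
  set M := fromRows A (fromRows G (fromRows (-G) (1 : Matrix (Fin s) (Fin s) ℝ)))
  set d := Sum.elim b (Sum.elim g (Sum.elim (-g) ℓ))
  have hsys : ∀ x, d ≤ M *ᵥ x ↔ b ≤ A *ᵥ x ∧ G *ᵥ x = g ∧ ℓ ≤ x := by
    intro x
    simp only [M, d, fromRows_mulVec, Sum.elim_le_elim_iff, neg_mulVec, neg_le_neg_iff,
      one_mulVec, le_antisymm_iff (a := G *ᵥ x)]
    tauto
  obtain ⟨y, hy₀, hyM, hyd⟩ := exists_dual_gt_of_forall_le M d c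
    (by simpa only [hsys] using hfeas)
    (fun x hx => by obtain ⟨h₁, h₂, h₃⟩ := (hsys x).1 hx; exact hbdd x h₁ h₂ h₃) hW
  obtain ⟨y₁, y₂, y₃, μ, rfl⟩ : ∃ y₁ y₂ y₃ μ, y = Sum.elim y₁ (Sum.elim y₂ (Sum.elim y₃ μ)) :=
    ⟨_, _, _, _, by ext (_ | _ | _ | _) <;> rfl⟩
  simp only [M, d, sumElim_vecMul_fromRows, sumElim_dotProduct_sumElim, vecMul_neg, vecMul_one,
    neg_dotProduct] at hyM hyd
  refine ⟨y₁, y₂ - y₃, μ, fun q => hy₀ (Sum.inl q), fun j => hy₀ (Sum.inr (Sum.inr (Sum.inr j))),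
    ?_, ?_⟩
  · rw [sub_vecMul, ← hyM]
    abel
  · rw [dotProduct_sub]
    linarith

section Partition

variable {m n E : ℕ}

def groupMatrix (grp : Fin E → Fin n) : Matrix (Fin n) (Fin E) ℝ :=
  of fun i j => if grp j = i then 1 else 0

lemma groupMatrix_mulVec (grp : Fin E → Fin n) (x : Fin E → ℝ) (i : Fin n) :
    (groupMatrix grp *ᵥ x) i = ∑ j, if grp j = i then x j else 0 := by
  simp [groupMatrix, mulVec, dotProduct, ite_mul]

lemma vecMul_groupMatrix (grp : Fin E → Fin n) (v : Fin n → ℝ) :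
    v ᵥ* groupMatrix grp = fun j => v (grp j) := by
  ext j
  simp [groupMatrix, vecMul, dotProduct, mul_ite]

variable (A : Matrix (Fin m) (Fin E) ℝ) (b : Fin m → ℝ) (c : Fin E → ℝ) (grp : Fin E → Fin n)

def feasValues : Set ℝ := {z | ∃ x, Feas A b grp x ∧ c ⬝ᵥ x = z}

def feasValuesThrough (j : Fin E) : Set ℝ := {z | ∃ x, Feas A b grp x ∧ x j = 1 ∧ c ⬝ᵥ x = z}

def IsIdeal : Prop :=
  ∀ c' : Fin E → ℝ, (∃ x0, Feas A b grp x0) →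
    ∃ xt, Feas A b grp xt ∧ Integral xt ∧ ∀ y, Feas A b grp y → c' ⬝ᵥ xt ≤ c' ⬝ᵥ y

def PairwiseIncompatible (I : Finset (Fin E)) : Prop :=
  ∀ x, Feas A b grp x → Integral x → ∀ j ∈ I, ∀ j' ∈ I, x j = 1 → x j' = 1 → j = j'

lemma feas_iff (x : Fin E → ℝ) :
    Feas A b grp x ↔ b ≤ A *ᵥ x ∧ groupMatrix grp *ᵥ x = 1 ∧ 0 ≤ x := by
  simp only [Feas, funext_iff, groupMatrix_mulVec, Pi.one_apply]

lemma convex_setOf_feas : Convex ℝ {x | Feas A b grp x} := by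
  intro x (hx : Feas A b grp x) y (hy : Feas A b grp y) s t hs ht hst
  change Feas A b grp _
  rw [feas_iff] at hx hy ⊢
  refine ⟨?_, ?_, add_nonneg (smul_nonneg hs hx.2.2) (smul_nonneg ht hy.2.2)⟩
  · rw [mulVec_add, mulVec_smul, mulVec_smul]
    calc b = s • b + t • b := by rw [← add_smul, hst, one_smul]
      _ ≤ _ := add_le_add (smul_le_smul_of_nonneg_left hx.1 hs)
          (smul_le_smul_of_nonneg_left hy.1 ht)
  · rw [mulVec_add, mulVec_smul, mulVec_smul, hx.2.1, hy.2.1, ← add_smul, hst, one_smul]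

lemma rc_eq (uq : Fin m → ℝ) (uv : Fin n → ℝ) :
    rc A c grp uq uv = c - uv ᵥ* groupMatrix grp - uq ᵥ* A := by
  ext j
  simp [rc, vecMul_groupMatrix, vecMul, dotProduct, mul_comm]

lemma dualFeas_iff (uq : Fin m → ℝ) (uv : Fin n → ℝ) :
    DualFeas A c grp uq uv ↔ 0 ≤ uq ∧ 0 ≤ rc A c grp uq uv := by
  simp only [DualFeas, rc, Pi.le_def, Pi.zero_apply, sub_sub, sub_nonneg]

lemma dualObj_add_rc_le {uq : Fin m → ℝ} {uv : Fin n → ℝ} (hu : DualFeas A c grp uq uv)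
    {x : Fin E → ℝ} (hx : Feas A b grp x) {j : Fin E} (hj : x j = 1) :
    dualObj b uq uv + rc A c grp uq uv j ≤ c ⬝ᵥ x := by
  rw [feas_iff] at hx
  rw [dualFeas_iff] at hu
  have hcx : c ⬝ᵥ x =
      (uq ᵥ* A) ⬝ᵥ x + (uv ᵥ* groupMatrix grp) ⬝ᵥ x + rc A c grp uq uv ⬝ᵥ x := by
    rw [rc_eq, sub_dotProduct, sub_dotProduct]
    ring
  have hA : b ⬝ᵥ uq ≤ (uq ᵥ* A) ⬝ᵥ x :=
    calc b ⬝ᵥ uq ≤ (A *ᵥ x) ⬝ᵥ uq := dotProduct_le_dotProduct_of_nonneg_right hx.1 hu.1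
      _ = (uq ᵥ* A) ⬝ᵥ x := by rw [dotProduct_comm, dotProduct_mulVec]
  have hG : (uv ᵥ* groupMatrix grp) ⬝ᵥ x = ∑ i, uv i := by
    rw [← dotProduct_mulVec, hx.2.1, dotProduct_one]
  have hrc : rc A c grp uq uv j ≤ rc A c grp uq uv ⬝ᵥ x := by
    simpa [hj, dotProduct] using single_le_sum (f := fun k => rc A c grp uq uv k * x k)
      (fun k _ => mul_nonneg (hu.2 k) (hx.2.2 k)) (mem_univ j)
  rw [dualObj]
  linarith

lemma dotProduct_ite_mem (I : Finset (Fin E)) (f x : Fin E → ℝ) :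
    (fun j => if j ∈ I then f j else 0) ⬝ᵥ x = ∑ j ∈ I, f j * x j := by
  simp [dotProduct, ite_mul, sum_ite_mem]

lemma exists_dualFeas_lt_dualObj_add_mul_sum_rc (I : Finset (Fin E)) {α V W : ℝ} (hα : 0 ≤ α)
    (hfeas : ∃ x, Feas A b grp x ∧ ∀ j ∈ I, α ≤ x j)
    (hbdd : ∀ x, Feas A b grp x → (∀ j ∈ I, α ≤ x j) → V ≤ c ⬝ᵥ x) (hW : W < V) :
    ∃ uq uv, DualFeas A c grp uq uv ∧ W < dualObj b uq uv + α * ∑ j ∈ I, rc A c grp uq uv j := by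
  set ℓ : Fin E → ℝ := fun j => if j ∈ I then α else 0
  have hℓ : ∀ x : Fin E → ℝ, ℓ ≤ x ↔ 0 ≤ x ∧ ∀ j ∈ I, α ≤ x j := fun x => by
    have hj : ∀ j, ℓ j ≤ x j ↔ 0 ≤ x j ∧ (j ∈ I → α ≤ x j) := fun j => by
      by_cases hj : j ∈ I
      · simpa [ℓ, hj] using fun h => hα.trans h
      · simp [ℓ, hj]
    simp only [Pi.le_def, hj, Pi.zero_apply, forall_and]
  have hsys : ∀ x, Feas A b grp x ∧ (∀ j ∈ I, α ≤ x j) ↔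
      b ≤ A *ᵥ x ∧ groupMatrix grp *ᵥ x = 1 ∧ ℓ ≤ x := fun x => by
    rw [feas_iff, hℓ]
    tauto
  obtain ⟨uq, uv, μ, huq, hμ, hc, hlt⟩ := exists_dual_gt_of_forall_le_of_mixed A b
    (groupMatrix grp) 1 ℓ c (by simpa only [hsys] using hfeas)
    (fun x h₁ h₂ h₃ => by obtain ⟨hx, hxI⟩ := (hsys x).2 ⟨h₁, h₂, h₃⟩; exact hbdd x hx hxI) hW
  have hrc : rc A c grp uq uv = μ := by
    rw [rc_eq, ← hc]
    abel
  refine ⟨uq, uv, (dualFeas_iff A c grp uq uv).2 ⟨huq, hrc ▸ hμ⟩, ?_⟩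
  have hℓμ : ℓ ⬝ᵥ μ = α * ∑ j ∈ I, μ j := by rw [dotProduct_ite_mem, mul_sum]
  rwa [hrc, dualObj, ← one_dotProduct, ← hℓμ]

lemma exists_feas_inv_card_le (I : Finset (Fin E)) (hI : I.Nonempty)
    (h : ∀ j ∈ I, ∃ x, Feas A b grp x ∧ x j = 1) :
    ∃ x, Feas A b grp x ∧ ∀ j ∈ I, (I.card : ℝ)⁻¹ ≤ x j := by
  choose! X hX hXj using h
  have hcard : (I.card : ℝ) ≠ 0 := by exact_mod_cast hI.card_pos.ne'
  refine ⟨∑ j ∈ I, (I.card : ℝ)⁻¹ • X j,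
    (convex_setOf_feas A b grp).sum_mem (fun _ _ => by positivity)
      (by rw [sum_const, nsmul_eq_mul, mul_inv_cancel₀ hcard]) hX, fun k hk => ?_⟩
  calc (I.card : ℝ)⁻¹ = ((I.card : ℝ)⁻¹ • X k) k := by simp [hXj k hk]
    _ ≤ _ := by
      rw [Finset.sum_apply]
      exact single_le_sum (f := fun j => ((I.card : ℝ)⁻¹ • X j) k)
        (fun j hj => smul_nonneg (by positivity) ((feas_iff A b grp _).1 (hX j hj)).2.2 k) hk

variable {A b c grp} {zstar : ℝ} {I : Finset (Fin E)} {R : Fin E → ℝ}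

lemma le_dotProduct_sub_of_integral
    (hz : IsLeast (feasValues A b c grp) zstar)
    (hinc : PairwiseIncompatible A b grp I)
    (hR : ∀ j ∈ I, IsLeast (feasValuesThrough A b c grp j) (zstar + R j))
    {x : Fin E → ℝ} (hx : Feas A b grp x) (hxi : Integral x) :
    zstar ≤ c ⬝ᵥ x - ∑ j ∈ I, R j * x j := by
  by_cases hex : ∃ k ∈ I, x k = 1
  · obtain ⟨k, hk, hxk⟩ := hex
    have hsum : ∑ j ∈ I, R j * x j = R k := by
      rw [sum_eq_single_of_mem k hk, hxk, mul_one]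
      intro j hj hjk
      rcases hxi j with hxj | hxj
      · rw [hxj, mul_zero]
      · exact absurd (hinc x hx hxi j hj k hk hxj hxk) hjk
    linarith [(hR k hk).2 ⟨x, hx, hxk, rfl⟩]
  · push Not at hex
    have hsum : ∑ j ∈ I, R j * x j = 0 :=
      sum_eq_zero fun j hj => by rw [(hxi j).resolve_right (hex j hj), mul_zero]
    linarith [hz.2 ⟨x, hx, rfl⟩]

lemma le_dotProduct_sub_of_ideal
    (hz : IsLeast (feasValues A b c grp) zstar)
    (hideal : IsIdeal A b grp)
    (hinc : PairwiseIncompatible A b grp I)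
    (hR : ∀ j ∈ I, IsLeast (feasValuesThrough A b c grp j) (zstar + R j))
    {x : Fin E → ℝ} (hx : Feas A b grp x) :
    zstar ≤ c ⬝ᵥ x - ∑ j ∈ I, R j * x j := by
  set c' := c - fun j => if j ∈ I then R j else 0
  have hc' : ∀ y, c' ⬝ᵥ y = c ⬝ᵥ y - ∑ j ∈ I, R j * y j := fun y => by
    rw [sub_dotProduct, dotProduct_ite_mem]
  obtain ⟨xt, hxt, hxti, hmin⟩ := hideal c' ⟨x, hx⟩
  calc zstar ≤ c' ⬝ᵥ xt := (hc' xt).symm ▸ le_dotProduct_sub_of_integral hz hinc hR hxt hxti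
    _ ≤ c' ⬝ᵥ x := hmin x hx
    _ = _ := hc' x

lemma add_mul_sum_le_dotProduct_of_ideal
    (hz : IsLeast (feasValues A b c grp) zstar)
    (hideal : IsIdeal A b grp)
    (hinc : PairwiseIncompatible A b grp I)
    (hR : ∀ j ∈ I, IsLeast (feasValuesThrough A b c grp j) (zstar + R j))
    {α : ℝ} {x : Fin E → ℝ} (hx : Feas A b grp x) (hxI : ∀ j ∈ I, α ≤ x j) :
    zstar + α * ∑ j ∈ I, R j ≤ c ⬝ᵥ x := by
  have hRnn : ∀ j ∈ I, 0 ≤ R j := fun j hj => by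
    obtain ⟨y, hy, -, hcy⟩ := (hR j hj).1
    linarith [hz.2 ⟨y, hy, hcy⟩]
  have hsum : α * ∑ j ∈ I, R j ≤ ∑ j ∈ I, R j * x j := by
    rw [mul_sum]
    exact sum_le_sum fun j hj => by
      rw [mul_comm]; exact mul_le_mul_of_nonneg_left (hxI j hj) (hRnn j hj)
  linarith [le_dotProduct_sub_of_ideal hz hideal hinc hR hx]

end Partition

lemma Finset.eq_of_forall_add_le_of_add_inv_card_mul_sum_le {ι : Type*} {s : Finset ι}
    (hs : s.Nonempty) {a a' : ℝ} {f f' : ι → ℝ} (hle : ∀ i ∈ s, a + f i ≤ a' + f' i)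
    (havg : a' + (s.card : ℝ)⁻¹ * ∑ i ∈ s, f' i ≤ a + (s.card : ℝ)⁻¹ * ∑ i ∈ s, f i) :
    ∀ i ∈ s, a + f i = a' + f' i := by
  have hcard : (0 : ℝ) < s.card := by exact_mod_cast hs.card_pos
  have hmean : ∀ (e : ℝ) (g : ι → ℝ),
      e + (s.card : ℝ)⁻¹ * ∑ i ∈ s, g i = (s.card : ℝ)⁻¹ * ∑ i ∈ s, (e + g i) := fun e g => by
    rw [sum_add_distrib, sum_const, nsmul_eq_mul, mul_add, inv_mul_cancel_left₀ hcard.ne']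
  rw [hmean, hmean] at havg
  exact (sum_eq_sum_iff_of_le hle).1
    (le_antisymm (sum_le_sum hle) (le_of_mul_le_mul_left havg (inv_pos.2 hcard)))

/-- Every optimizer of the merged-objective dual gives all exact reduced costs on I:
if u* maximizes w(u) + (1/|I|)·Σ_{kl∈I} r_{kl}(u) over dual feasible u, where I is a
nonempty set of pairwise incompatible indices each in some feasible integral solution,
then for every kl ∈ I, w(u*) + r_{kl}(u*) = z*_{|kl} = z* + R_{kl}. -/
theorem stmt16 {m n E : ℕ} (A : Matrix (Fin m) (Fin E) ℝ) (b : Fin m → ℝ)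
    (c : Fin E → ℝ) (grp : Fin E → Fin n) (zstar : ℝ)
    (hz : IsLeast {z | ∃ x : Fin E → ℝ, Feas A b grp x ∧ c ⬝ᵥ x = z} zstar)
    (hideal : ∀ c' : Fin E → ℝ, (∃ x0 : Fin E → ℝ, Feas A b grp x0) →
      ∃ xt : Fin E → ℝ, Feas A b grp xt ∧ Integral xt ∧
        ∀ y : Fin E → ℝ, Feas A b grp y → c' ⬝ᵥ xt ≤ c' ⬝ᵥ y)
    (I : Finset (Fin E)) (hI : I.Nonempty)
    (hinc : ∀ x : Fin E → ℝ, Feas A b grp x → Integral x →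
      ∀ j ∈ I, ∀ j' ∈ I, x j = 1 → x j' = 1 → j = j')
    (hmem : ∀ j ∈ I, ∃ x : Fin E → ℝ, Feas A b grp x ∧ Integral x ∧ x j = 1)
    (R : Fin E → ℝ)
    (hR : ∀ j ∈ I,
      IsLeast {z | ∃ x : Fin E → ℝ, Feas A b grp x ∧ x j = 1 ∧ c ⬝ᵥ x = z}
        (zstar + R j))
    (uq : Fin m → ℝ) (uv : Fin n → ℝ) (hu : DualFeas A c grp uq uv)
    (hmaxu : ∀ (uq' : Fin m → ℝ) (uv' : Fin n → ℝ), DualFeas A c grp uq' uv' →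
      dualObj b uq' uv' + (1 / (I.card : ℝ)) * ∑ kl ∈ I, rc A c grp uq' uv' kl ≤
      dualObj b uq uv + (1 / (I.card : ℝ)) * ∑ kl ∈ I, rc A c grp uq uv kl) :
    ∀ kl ∈ I, dualObj b uq uv + rc A c grp uq uv kl = zstar + R kl := by
  have hweak : ∀ kl ∈ I, dualObj b uq uv + rc A c grp uq uv kl ≤ zstar + R kl := by
    intro kl hkl
    obtain ⟨x, hx, hxkl, hcx⟩ := (hR kl hkl).1
    exact hcx ▸ dualObj_add_rc_le A b c grp hu hx hxkl
  have hmerged : zstar + (I.card : ℝ)⁻¹ * ∑ kl ∈ I, R kl ≤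
      dualObj b uq uv + (I.card : ℝ)⁻¹ * ∑ kl ∈ I, rc A c grp uq uv kl := by
    refine le_of_forall_lt fun W hW => ?_
    obtain ⟨uq', uv', hu', hlt⟩ := exists_dualFeas_lt_dualObj_add_mul_sum_rc A b c grp I
      (by positivity) (exists_feas_inv_card_le A b grp I hI fun j hj =>
        (hmem j hj).imp fun _ hx => ⟨hx.1, hx.2.2⟩)
      (fun _ hx hxI => add_mul_sum_le_dotProduct_of_ideal hz hideal hinc hR hx hxI) hW
    exact hlt.trans_le (by simpa only [one_div] using hmaxu uq' uv' hu')
  exact eq_of_forall_add_le_of_add_inv_card_mul_sum_le hI hweak hmerged
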